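/- arXiv:2103.16602 — 7 statements merged into one kernel-verified Lean document; each statement's English description precedes it below -/
import Mathlib

section
/- Let G be a group and let α, β be automorphisms of G. Let T_α = G ⋊_α ℤ and T_β = G ⋊_β ℤ denote the mapping tori, i.e. the semidirect products in which the generator t_α (resp. t_β) of the ℤ factor acts on G by α (resp. β). Then α and β represent conjugate elements of Out(G) — i.e. there exist an automorphism φ of G and an element g ∈ G with φ ∘ α ∘ φ⁻¹ = Ad(g) ∘ β, where Ad(g)(x) = g·x·g⁻¹ — if and only if there exists a group isomorphism ψ : T_α → T_β that carries the fiber G onto the fiber G and satisfies ψ(t_α) ∈ G·t_β (ψ is fiber and orientation preserving). -/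
/-!
A fiber-preserving isomorphism `ψ : T_α ≃* T_β` restricts to an automorphism `φ` of the fiber `G`.
Transporting the relation `inl (α x) = t_α * inl x * t_α⁻¹` along `ψ`, with `ψ t_α = inl g * t_β`,
gives `φ ∘ α = Ad g ∘ β ∘ φ`. Conversely `T_α ≅ T_{φαφ⁻¹}` by applying `φ` on the fiber, and
`T_{Ad g ∘ β} ≅ T_β` by `t ↦ inl g * t`, because `inl g * t_β` acts on the fiber by `Ad g ∘ β`.
-/

open SemidirectProduct Multiplicative

namespace SemidirectProduct

variable {N G₁ G₂ : Type*} [Group N] [Group G₁] [Group G₂]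
  {φ₁ : G₁ →* MulAut N} {φ₂ : G₂ →* MulAut N}

theorem map_range_inl_eq_range_inl_iff (ψ : N ⋊[φ₁] G₁ ≃* N ⋊[φ₂] G₂) :
    Subgroup.map ψ.toMonoidHom inl.range = inl.range ↔
      ∃ e : N ≃* N, ∀ x, ψ (inl x) = inl (e x) := by
  constructor
  · intro h
    let fiber₁ : N ≃* (inl : N →* N ⋊[φ₁] G₁).range := MonoidHom.ofInjective inl_injective
    let fiber₂ : N ≃* (inl : N →* N ⋊[φ₂] G₂).range := MonoidHom.ofInjective inl_injective
    let ψ_fiber := (ψ.subgroupMap _).trans (MulEquiv.subgroupCongr h)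
    refine ⟨fiber₁.trans (ψ_fiber.trans fiber₂.symm), fun x => ?_⟩
    exact congrArg Subtype.val (fiber₂.apply_symm_apply (ψ_fiber (fiber₁ x))).symm
  · rintro ⟨e, he⟩
    have : ψ.toMonoidHom.comp inl = inl.comp (e : N →* N) := MonoidHom.ext he
    rw [MonoidHom.map_range, this, MonoidHom.range_comp, e.range_eq_top, ← MonoidHom.range_eq_map]

end SemidirectProduct

section

variable {G H : Type*} [Group G] [Group H]

theorem MonoidHom.map_zpow_apply_of_map_apply (f : G →* H) {a : MulAut G} {b : MulAut H}
    (h : ∀ x, f (a x) = b (f x)) (n : ℤ) (x : G) : f ((a ^ n) x) = (b ^ n) (f x) := by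
  have h_inv (y : G) : f (a⁻¹ y) = b⁻¹ (f y) :=
    b.injective (by rw [← h, MulAut.apply_inv_self, MulAut.apply_inv_self])
  induction n using Int.induction_on generalizing x with
  | zero => rfl
  | succ n ih => rw [zpow_add_one, zpow_add_one, MulAut.mul_apply, MulAut.mul_apply, ih, h]
  | pred n ih => rw [zpow_sub_one, zpow_sub_one, MulAut.mul_apply, MulAut.mul_apply, ih, h_inv]

theorem MulAut.mul_mul_inv_eq_iff {φ a b : MulAut G} :
    φ * a * φ⁻¹ = b ↔ ∀ x, φ (a x) = b (φ x) := by
  rw [mul_inv_eq_iff_eq_mul, MulEquiv.ext_iff]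
  rfl

abbrev MappingTorus (α : MulAut G) : Type _ := G ⋊[zpowersHom (MulAut G) α] Multiplicative ℤ

namespace MappingTorus

variable {α β γ : MulAut G}

-- Reducible, so that lemmas stated for `t α` apply to the `inr (ofAdd 1)` of the main statement.
abbrev t (α : MulAut G) : MappingTorus α := inr (ofAdd 1)

theorem inl_apply (α : MulAut G) (x : G) :
    (inl (α x) : MappingTorus α) = t α * inl x * (t α)⁻¹ := by
  rw [t, ← map_inv, ← inl_aut]
  simp

def lift (f : G →* H) (c : H) (hf : ∀ x, f (α x) = c * f x * c⁻¹) : MappingTorus α →* H :=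
  SemidirectProduct.lift f (zpowersHom H c) fun n => MonoidHom.ext fun x => by
    simp only [MonoidHom.comp_apply, MulEquiv.coe_toMonoidHom, zpowersHom_apply, map_zpow]
    exact f.map_zpow_apply_of_map_apply (fun x => (hf x).trans (MulAut.conj_apply c _).symm) _ x

@[simp]
theorem lift_inl (f : G →* H) (c : H) (hf : ∀ x, f (α x) = c * f x * c⁻¹) (x : G) :
    lift f c hf (inl x) = f x :=
  SemidirectProduct.lift_inl ..

@[simp]
theorem lift_t (f : G →* H) (c : H) (hf : ∀ x, f (α x) = c * f x * c⁻¹) :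
    lift f c hf (t α) = c := by
  simp [lift]

theorem hom_ext {f f' : MappingTorus α →* H} (h_inl : f.comp inl = f'.comp inl)
    (h_t : f (t α) = f' (t α)) : f = f' :=
  SemidirectProduct.hom_ext h_inl (MonoidHom.ext_mint h_t)

def congrAut (φ α : MulAut G) : MappingTorus α ≃* MappingTorus (φ * α * φ⁻¹) :=
  SemidirectProduct.congr φ (MulEquiv.refl _) fun n => by
    simp [← MulAut.mul_def, conj_zpow]

@[simp]
theorem congrAut_inl (φ α : MulAut G) (x : G) : congrAut φ α (inl x) = inl (φ x) :=
  rfl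

@[simp]
theorem congrAut_t (φ α : MulAut G) : congrAut φ α (t α) = t (φ * α * φ⁻¹) := by
  ext
  · exact map_one φ
  · rfl

def innerTwist (g : G) (h : γ = MulAut.conj g * β) : MappingTorus γ ≃* MappingTorus β :=
  MonoidHom.toMulEquiv
    (lift inl (inl g * t β) fun x => by
      simp only [h, MulAut.mul_apply, MulAut.conj_apply, map_mul, map_inv, inl_apply β]
      group)
    (lift inl (inl g⁻¹ * t γ) fun x =>
      calc inl (β x) = inl g⁻¹ * inl (γ x) * inl g := by
            simp only [h, MulAut.mul_apply, MulAut.conj_apply, map_mul, map_inv]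
            group
        _ = inl g⁻¹ * t γ * inl x * (inl g⁻¹ * t γ)⁻¹ := by
            rw [inl_apply γ, map_inv]
            group)
    (hom_ext (MonoidHom.ext fun x => by simp) (by simp))
    (hom_ext (MonoidHom.ext fun x => by simp) (by simp))

@[simp]
theorem innerTwist_inl (g : G) (h : γ = MulAut.conj g * β) (x : G) :
    innerTwist g h (inl x) = inl x := by
  simp [innerTwist]

@[simp]
theorem innerTwist_t (g : G) (h : γ = MulAut.conj g * β) :
    innerTwist g h (t γ) = inl g * t β := by
  simp [innerTwist]

theorem mul_mul_inv_eq_conj_mul_of_map_inl_of_map_t (F : MappingTorus α →* MappingTorus β)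
    {φ : MulAut G} {g : G} (h_inl : ∀ x, F (inl x) = inl (φ x)) (h_t : F (t α) = inl g * t β) :
    φ * α * φ⁻¹ = MulAut.conj g * β := by
  refine MulAut.mul_mul_inv_eq_iff.2 fun x => inl_injective (φ := zpowersHom (MulAut G) β) ?_
  rw [← h_inl, inl_apply α, map_mul, map_mul, map_inv, h_t, h_inl]
  simp only [MulAut.mul_apply, MulAut.conj_apply, map_mul, map_inv, inl_apply β]
  group

end MappingTorus

end

/-- Two automorphisms `α, β` of a group `G` represent conjugate
elements of `Out G` if and only if there is a fiber and orientation preserving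
isomorphism between the mapping tori `G ⋊[α] ℤ` and `G ⋊[β] ℤ`. -/
theorem conj_in_out_iff_fiber_orientation_preserving_iso
    {G : Type*} [Group G] (α β : MulAut G) :
    (∃ (φ : MulAut G) (g : G), φ * α * φ⁻¹ = MulAut.conj g * β) ↔
      ∃ ψ : (G ⋊[zpowersHom (MulAut G) α] Multiplicative ℤ) ≃*
            (G ⋊[zpowersHom (MulAut G) β] Multiplicative ℤ),
        Subgroup.map ψ.toMonoidHom
            (SemidirectProduct.inl : G →*
              G ⋊[zpowersHom (MulAut G) α] Multiplicative ℤ).range =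
          (SemidirectProduct.inl : G →*
              G ⋊[zpowersHom (MulAut G) β] Multiplicative ℤ).range ∧
        ∃ g : G,
          ψ (SemidirectProduct.inr (Multiplicative.ofAdd 1)) =
            SemidirectProduct.inl g *
              SemidirectProduct.inr (Multiplicative.ofAdd 1) := by
  constructor
  · rintro ⟨φ, g, h⟩
    refine ⟨(MappingTorus.congrAut φ α).trans (MappingTorus.innerTwist g h), ?_, g, by simp⟩
    exact (SemidirectProduct.map_range_inl_eq_range_inl_iff _).2 ⟨φ, fun x => by simp⟩
  · rintro ⟨ψ, h_fiber, g, h_t⟩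
    obtain ⟨φ, h_inl⟩ := (SemidirectProduct.map_range_inl_eq_range_inl_iff ψ).1 h_fiber
    exact ⟨φ, g, MappingTorus.mul_mul_inv_eq_conj_mul_of_map_inl_of_map_t ψ.toMonoidHom h_inl h_t⟩
end

section
/- Let G be a finitely generated group satisfying: (i) G is conjugacy separable, i.e. for all a, b ∈ G that are not conjugate in G there exist a finite group Q and a group homomorphism f : G → Q such that f(a) and f(b) are not conjugate in Q; (ii) G has no pointwise inner outer automorphisms, i.e. for every automorphism α of G that is not inner there exists g ∈ G such that α(g) is not conjugate to g; (iii) there is a finite list α₁, …, α_k of automorphisms of G containing representatives of all conjugacy classes of finite-order elements of Out(G), i.e. for every automorphism β of G with β^m inner for some m ≥ 1, there exist an index i, an automorphism γ of G, and g ∈ G with γ ∘ β ∘ γ⁻¹ = Ad(g) ∘ α_i. Then G is Minkowskian: there exists a characteristic finite-index subgroup K of G such that the kernel of the induced homomorphism Out(G) → Out(G/K) is torsion-free; explicitly, for every automorphism α of G, if α^m is inner for some m ≥ 1 and there exists g₀ ∈ G such that α(x)·(g₀·x·g₀⁻¹)⁻¹ ∈ K for all x ∈ G, then α is inner. -/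
private lemma finite_monoidHom_of_fg {G Q : Type*} [Group G] [Group Q] [Finite Q]
    (hFG : Group.FG G) : Finite (G →* Q) := by
  obtain ⟨S, hS⟩ := hFG.out
  refine Finite.of_injective (fun f : G →* Q => (fun s : (S : Set G) => f s)) ?_
  intro f g hfg
  exact MonoidHom.eq_of_eqOn_dense hS (fun x hx => congrFun hfg ⟨x, hx⟩)

private lemma ker_finiteIndex {G Q : Type*} [Group G] [Group Q] [Finite Q] (f : G →* Q) :
    f.ker.FiniteIndex := by
  constructor
  rw [Subgroup.index_ker]
  have : Nonempty f.range := ⟨1⟩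
  exact Nat.card_ne_zero.mpr ⟨this, inferInstance⟩

private lemma kerInf_props {G : Type*} [Group G] (hFG : Group.FG G) (Q : Type*) [Group Q]
    [Finite Q] :
    (⨅ f : G →* Equiv.Perm Q, f.ker).Characteristic ∧
    (⨅ f : G →* Equiv.Perm Q, f.ker).FiniteIndex ∧
    ∀ f : G →* Q, (⨅ f : G →* Equiv.Perm Q, f.ker) ≤ f.ker := by
  refine ⟨?_, ?_, ?_⟩
  · rw [Subgroup.characteristic_iff_comap_eq]
    intro φ
    ext x
    simp only [Subgroup.mem_comap, Subgroup.mem_iInf, MonoidHom.mem_ker]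
    constructor
    · intro h f
      have := h (f.comp φ.symm.toMonoidHom)
      simpa using this
    · intro h f
      have := h (f.comp φ.toMonoidHom)
      simpa using this
  · haveI := finite_monoidHom_of_fg (Q := Equiv.Perm Q) hFG
    exact Subgroup.finiteIndex_iInf fun f => ker_finiteIndex f
  · intro f x hx
    have hx' : ((MulAction.toPermHom Q Q).comp f) x = 1 :=
      Subgroup.mem_iInf.mp hx ((MulAction.toPermHom Q Q).comp f)
    have h0 : (MulAction.toPermHom Q Q) (f x) = 1 := hx'
    have h1 : ((MulAction.toPermHom Q Q) (f x)) 1 = (1 : Equiv.Perm Q) 1 := by rw [h0]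
    simpa [MulAction.toPermHom] using h1

private lemma conj_aut {G : Type*} [Group G] (φ : MulAut G) (g : G) :
    φ * MulAut.conj g * φ⁻¹ = MulAut.conj (φ g) := by
  ext x
  show φ ((MulAut.conj g) (φ⁻¹ x)) = (MulAut.conj (φ g)) x
  simp [MulAut.conj_apply, map_mul, map_inv]

private lemma conjRange_normal {G : Type*} [Group G] :
    ((MulAut.conj : G →* MulAut G).range).Normal := by
  constructor
  intro n hn φ
  obtain ⟨g, rfl⟩ := hn
  exact ⟨φ g, (conj_aut φ g).symm⟩

/-- A finitely generated group that is conjugacy separable, has no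
pointwise inner (non-inner) automorphisms, and has a finite list of representatives of
the conjugacy classes of finite-order elements of `Out G`, is Minkowskian: there is a
characteristic finite-index subgroup `K` such that any automorphism of finite order in
`Out G` that induces an inner automorphism of `G/K` is itself inner. -/
theorem effectively_minkowskian_of_conjSep
    {G : Type*} [Group G] (hFG : Group.FG G)
    (hsep : ∀ a b : G, ¬ IsConj a b →
      ∃ (Q : Type) (_ : Group Q) (_ : Finite Q) (f : G →* Q), ¬ IsConj (f a) (f b))
    (hpi : ∀ α : MulAut G, (¬ ∃ g : G, α = MulAut.conj g) →
      ∃ g : G, ¬ IsConj (α g) g)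
    (k : ℕ) (αs : Fin k → MulAut G)
    (hlist : ∀ β : MulAut G,
      (∃ m : ℕ, 1 ≤ m ∧ ∃ g : G, β ^ m = MulAut.conj g) →
      ∃ (i : Fin k) (γ : MulAut G) (g : G), γ * β * γ⁻¹ = MulAut.conj g * αs i) :
    ∃ K : Subgroup G, K.Characteristic ∧ K.FiniteIndex ∧
      ∀ α : MulAut G,
        (∃ m : ℕ, 1 ≤ m ∧ ∃ g : G, α ^ m = MulAut.conj g) →
        (∃ g₀ : G, ∀ x : G, α x * (g₀ * x * g₀⁻¹)⁻¹ ∈ K) →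
        ∃ g : G, α = MulAut.conj g := by
  classical
  have hP : ∀ i : Fin k, ∃ Ki : Subgroup G, Ki.Characteristic ∧ Ki.FiniteIndex ∧
      ((¬ ∃ g : G, αs i = MulAut.conj g) →
        ∀ h : G, ¬ (∀ x : G, (MulAut.conj h * αs i) x * x⁻¹ ∈ Ki)) := by
    intro i
    by_cases hin : ∃ g : G, αs i = MulAut.conj g
    · exact ⟨⊤, inferInstance, inferInstance, fun hni => absurd hin hni⟩
    · obtain ⟨g, hg⟩ := hpi (αs i) hin
      obtain ⟨Q, _, _, f, hf⟩ := hsep _ _ hg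
      obtain ⟨hchar, hfi, hle⟩ := kerInf_props hFG Q
      refine ⟨_, hchar, hfi, fun _ h hcon => ?_⟩
      apply hf
      have hker : f ((MulAut.conj h * αs i) g * g⁻¹) = 1 := hle f (hcon g)
      have e1 : f ((MulAut.conj h * αs i) g) = f g := by
        rwa [map_mul, map_inv, mul_inv_eq_one] at hker
      refine isConj_iff.mpr ⟨f h, ?_⟩
      calc f h * f ((αs i) g) * (f h)⁻¹
          = f ((MulAut.conj h * αs i) g) := by
            simp [MulAut.mul_apply, MulAut.conj_apply, map_mul, map_inv, mul_assoc]
        _ = f g := e1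
  choose Ks h1 h2 h3 using hP
  have hKchar : (⨅ i, Ks i).Characteristic := by
    rw [Subgroup.characteristic_iff_comap_eq]
    intro φ
    rw [Subgroup.comap_iInf]
    exact iInf_congr fun i => Subgroup.characteristic_iff_comap_eq.mp (h1 i) φ
  refine ⟨⨅ i, Ks i, hKchar, Subgroup.finiteIndex_iInf h2, ?_⟩
  rintro α ⟨m, hm, g, hαm⟩ ⟨g₀, hg₀⟩
  by_contra hα
  set β : MulAut G := (MulAut.conj g₀)⁻¹ * α with hβ
  haveI : (⨅ i, Ks i).Normal := by
    haveI := hKchar; infer_instance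
  have hβK : ∀ x : G, β x * x⁻¹ ∈ ⨅ i, Ks i := by
    intro x
    have hx : α x * (g₀ * x * g₀⁻¹)⁻¹ ∈ ⨅ i, Ks i := hg₀ x
    have e : β x * x⁻¹ = g₀⁻¹ * (α x * (g₀ * x * g₀⁻¹)⁻¹) * (g₀⁻¹)⁻¹ := by
      have : β x = g₀⁻¹ * α x * g₀ := by
        rw [hβ]
        simp [MulAut.mul_apply, MulAut.conj_inv_apply]
      rw [this]; group
    rw [e]
    exact Subgroup.Normal.conj_mem inferInstance _ hx g₀⁻¹
  have hβni : ¬ ∃ h : G, β = MulAut.conj h := by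
    rintro ⟨h, hh⟩
    refine hα ⟨g₀ * h, ?_⟩
    rw [map_mul, ← hh, hβ]
    group
  have hβfin : ∃ m' : ℕ, 1 ≤ m' ∧ ∃ g' : G, β ^ m' = MulAut.conj g' := by
    refine ⟨m, hm, ?_⟩
    haveI := conjRange_normal (G := G)
    have hq1 : (QuotientGroup.mk' (MulAut.conj : G →* MulAut G).range) β
        = (QuotientGroup.mk' (MulAut.conj : G →* MulAut G).range) α := by
      refine (QuotientGroup.mk'_eq_mk' _).mpr ⟨MulAut.conj (α⁻¹ g₀), ⟨α⁻¹ g₀, rfl⟩, ?_⟩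
      rw [← conj_aut α⁻¹ g₀, hβ]
      group
    have hq2 : (QuotientGroup.mk' (MulAut.conj : G →* MulAut G).range) (β ^ m) = 1 := by
      rw [map_pow, hq1, ← map_pow, hαm]
      exact (QuotientGroup.eq_one_iff _).mpr ⟨g, rfl⟩
    obtain ⟨g', hg'⟩ := (QuotientGroup.eq_one_iff _).mp hq2
    exact ⟨g', hg'.symm⟩
  obtain ⟨i, γ, h, hγ⟩ := hlist β hβfin
  have hαi_ni : ¬ ∃ w : G, αs i = MulAut.conj w := by
    rintro ⟨w, hw⟩
    refine hβni ⟨γ⁻¹ (h * w), ?_⟩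
    rw [← conj_aut γ⁻¹ (h * w), map_mul, ← hw, ← hγ]
    group
  refine h3 i hαi_ni h ?_
  intro x
  have key : (MulAut.conj h * αs i) x * x⁻¹ = γ (β (γ⁻¹ x) * (γ⁻¹ x)⁻¹) := by
    rw [← hγ]
    simp [MulAut.mul_apply, map_mul, map_inv, MulAut.apply_inv_self]
  rw [key]
  have hmem : β (γ⁻¹ x) * (γ⁻¹ x)⁻¹ ∈ Ks i := iInf_le Ks i (hβK (γ⁻¹ x))
  have := Subgroup.characteristic_iff_le_comap.mp (h1 i) γ hmem
  simpa [Subgroup.mem_comap] using this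
end

section
/- Let H be a group with trivial center and let G = H × ℤ. Let α be an automorphism of G that is not inner, but such that α^n is inner for some n ≥ 1 (so α represents a nontrivial finite-order element of Out(G)). Let t = (1, 1) denote the generator of the central factor, and let σ : H → H be the automorphism of H induced by α, defined by σ(h) = (first coordinate of α(h, 0)). Then either α(t) = t⁻¹ = (1, −1) (α flips the orientation of the center), or σ is not inner; in the latter case σ^n is inner, so σ represents a nontrivial finite-order element of Out(H). -/
/-!
The center of `H × A` (with `H` centerless, `A` abelian) is `1 × A`, so every automorphism `α`
preserves it: `α (h, a) = (σ h, χ h · c a)` with `σ` the induced map on `H`, `χ : H → A` a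
homomorphism and `c` an automorphism of `A`. The `n`-th power of `α` induces `σ^[n]` on `H`, so
`σ^[n]` is inner whenever `α ^ n` is. For `A = ℤ`, `c` is `±1`. If `c = 1` and `σ` were conjugation
by `h₀`, then `χ ∘ σ = χ`, so `α ^ n (h, 1) = (σ^[n] h, χ h ^ n)`; innerness of `α ^ n` forces
`χ h ^ n = 1`, hence `χ = 1` since `ℤ` is torsion-free, and `α` would be conjugation by `(h₀, 1)`.
-/

namespace MulAut

variable {H A : Type*} [Group H] [CommGroup A]

lemma fst_map_one_mk (hZ : Subgroup.center H = ⊥) (α : MulAut (H × A)) (a : A) :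
    (α (1, a)).1 = 1 := by
  have hcen : (1, a) ∈ Subgroup.center (H × A) := by
    rw [Subgroup.center_prod]
    exact ⟨Subgroup.one_mem _, Subgroup.mem_center_iff.mpr fun b => mul_comm b a⟩
  have : α (1, a) ∈ Subgroup.center (H × A) := MulEquivClass.apply_mem_center α hcen
  rw [Subgroup.center_prod, hZ] at this
  exact Subgroup.mem_bot.mp this.1

lemma fst_map_eq (hZ : Subgroup.center H = ⊥) (α : MulAut (H × A)) (p : H × A) :
    (α p).1 = (α (p.1, 1)).1 := by
  have hp : p = (p.1, 1) * (1, p.2) := by simp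
  conv_lhs => rw [hp]
  rw [map_mul, Prod.fst_mul, fst_map_one_mk hZ, mul_one]

lemma iterate_fst_map_mk_one (hZ : Subgroup.center H = ⊥) (α : MulAut (H × A)) (k : ℕ) (h : H) :
    (fun h : H => (α (h, 1)).1)^[k] h = ((α ^ k) (h, 1)).1 := by
  induction k with
  | zero => rfl
  | succ k ih =>
    rw [Function.iterate_succ_apply', ih, pow_succ', mul_apply, fst_map_eq hZ α ((α ^ k) (h, 1))]

lemma iterate_fst_map_mk_one_eq_conj (hZ : Subgroup.center H = ⊥) {α : MulAut (H × A)} {n : ℕ}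
    {g : H × A} (hg : α ^ n = conj g) (h : H) :
    (fun h : H => (α (h, 1)).1)^[n] h = g.1 * h * g.1⁻¹ := by
  rw [iterate_fst_map_mk_one hZ, hg, conj_apply]
  rfl

lemma map_one_mk (hZ : Subgroup.center H = ⊥) (α : MulAut (H × A)) (a : A) :
    α (1, a) = (1, (α (1, a)).2) :=
  Prod.ext (fst_map_one_mk hZ α a) rfl

lemma snd_map_one_snd_map_one_mk (hZ : Subgroup.center H = ⊥) (α β : MulAut (H × A))
    (hαβ : α * β = 1) (a : A) : (α (1, (β (1, a)).2)).2 = a := by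
  rw [← map_one_mk hZ, ← mul_apply, hαβ, one_apply]

def centralAut (hZ : Subgroup.center H = ⊥) (α : MulAut (H × A)) : MulAut A :=
  MonoidHom.toMulEquiv
    ((MonoidHom.snd H A).comp ((α : H × A →* H × A).comp (MonoidHom.inr H A)))
    ((MonoidHom.snd H A).comp
      (((α⁻¹ : MulAut (H × A)) : H × A →* H × A).comp (MonoidHom.inr H A)))
    (MonoidHom.ext (snd_map_one_snd_map_one_mk hZ _ _ (inv_mul_cancel α)))
    (MonoidHom.ext (snd_map_one_snd_map_one_mk hZ _ _ (mul_inv_cancel α)))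

lemma map_one_mk_eq_centralAut (hZ : Subgroup.center H = ⊥) (α : MulAut (H × A)) (a : A) :
    α (1, a) = (1, centralAut hZ α a) :=
  map_one_mk hZ α a

def sndCompInl (α : MulAut (H × A)) : H →* A :=
  (MonoidHom.snd H A).comp ((α : H × A →* H × A).comp (MonoidHom.inl H A))

section FstEqConj

variable {α : MulAut (H × A)} {h₀ : H}

lemma map_mk_of_fst_eq_conj (hfix : ∀ a, α (1, a) = (1, a))
    (hσ : ∀ h, (α (h, 1)).1 = h₀ * h * h₀⁻¹) (h : H) (a : A) :
    α (h, a) = (h₀ * h * h₀⁻¹, sndCompInl α h * a) := by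
  have hp : ((h, a) : H × A) = (h, 1) * (1, a) := by simp
  rw [hp, map_mul, hfix]
  exact Prod.ext (by simp [hσ]) rfl

lemma pow_apply_of_fst_eq_conj (hfix : ∀ a, α (1, a) = (1, a))
    (hσ : ∀ h, (α (h, 1)).1 = h₀ * h * h₀⁻¹) (k : ℕ) (h : H) (a : A) :
    (α ^ k) (h, a) = (h₀ ^ k * h * (h₀ ^ k)⁻¹, sndCompInl α h ^ k * a) := by
  induction k generalizing a with
  | zero => simp
  | succ k ih =>
    rw [pow_succ', mul_apply, ih, map_mk_of_fst_eq_conj hfix hσ, map_mul, map_mul, map_inv,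
      mul_inv_cancel_comm]
    exact Prod.ext (by group) (by simp only [pow_succ', mul_assoc])

lemma eq_conj_of_fst_eq_conj_of_pow_eq_conj [IsMulTorsionFree A]
    (hfix : ∀ a, α (1, a) = (1, a)) (hσ : ∀ h, (α (h, 1)).1 = h₀ * h * h₀⁻¹)
    {n : ℕ} (hn : n ≠ 0) {g : H × A} (hg : α ^ n = conj g) : α = conj (h₀, 1) := by
  have hχ (h : H) : sndCompInl α h = 1 := by
    have := congrArg Prod.snd (pow_apply_of_fst_eq_conj hfix hσ n h 1)
    rw [hg, conj_apply] at this
    simp only [Prod.snd_mul, mul_one, Prod.snd_inv, mul_inv_cancel] at this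
    exact (pow_eq_one_iff_left hn).mp this.symm
  ext ⟨h, a⟩ <;> simp [map_mk_of_fst_eq_conj hfix hσ, hχ, conj_apply]

end FstEqConj

end MulAut

lemma Multiplicative.mulAut_int_eq_id_or_inv (e : MulAut (Multiplicative ℤ)) :
    (∀ a, e a = a) ∨ ∀ a, e a = a⁻¹ := by
  rcases Int.addEquiv_eq_refl_or_neg (MulEquiv.toAdditive e) with he | he
  · exact .inl fun a => toAdd.injective (DFunLike.congr_fun he a.toAdd)
  · exact .inr fun a => toAdd.injective (DFunLike.congr_fun he a.toAdd)

/-- Let `H` be a centerless group, `G = H × ℤ`, and `α` a non-inner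
automorphism of `G` with `α ^ n` inner for some `n ≥ 1`. Let `σ : H → H` be the
automorphism induced by `α` on `H` (first coordinate of `α (h, 0)`). Then either `α`
flips the orientation of the center (`α(t) = t⁻¹` for `t = (1, 1)`), or `σ` is not
inner, while `σ ^ n` is inner (so `σ` represents a nontrivial finite-order element of
`Out H`). -/
theorem flip_or_induces_nontrivial_torsion
    {H : Type*} [Group H] (hZ : Subgroup.center H = ⊥)
    (α : MulAut (H × Multiplicative ℤ)) (n : ℕ) (hn : 1 ≤ n)
    (hnotinner : ¬ ∃ g : H × Multiplicative ℤ, α = MulAut.conj g)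
    (hpow : ∃ g : H × Multiplicative ℤ, α ^ n = MulAut.conj g) :
    α (1, Multiplicative.ofAdd 1) = (1, Multiplicative.ofAdd (-1)) ∨
      ((¬ ∃ h₀ : H, ∀ h : H,
          (α (h, Multiplicative.ofAdd 0)).1 = h₀ * h * h₀⁻¹) ∧
        ∃ h₀ : H, ∀ h : H,
          (fun h : H => (α (h, Multiplicative.ofAdd 0)).1)^[n] h
            = h₀ * h * h₀⁻¹) := by
  obtain ⟨g, hg⟩ := hpow
  simp only [ofAdd_zero]
  rcases Multiplicative.mulAut_int_eq_id_or_inv (MulAut.centralAut hZ α) with hfix | hflip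
  · refine .inr ⟨?_, g.1, MulAut.iterate_fst_map_mk_one_eq_conj hZ hg⟩
    rintro ⟨h₀, hσ⟩
    have hfix' (a : Multiplicative ℤ) : α (1, a) = (1, a) := by
      rw [MulAut.map_one_mk_eq_centralAut hZ, hfix]
    exact hnotinner ⟨_, MulAut.eq_conj_of_fst_eq_conj_of_pow_eq_conj hfix' hσ (by omega) hg⟩
  · left
    rw [MulAut.map_one_mk_eq_centralAut hZ, hflip, ← ofAdd_neg]
end

section
/- Let H be a group and G = H × ℤ. Let α be an automorphism of G such that α(1, 1) = (1, 1), and suppose there exist h₀ ∈ H and a function n : H → ℤ with α(h, 0) = (h₀⁻¹·h·h₀, n(h)) for all h ∈ H, and with n(h) ≠ 0 for some h ∈ H. Then for every k ≥ 1 the automorphism α^k is not inner; in particular α represents an infinite-order element of Out(G). -/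
/-- Let `G = H × ℤ` and `α` an automorphism of `G` fixing the
generator `t = (1, 1)` of the `ℤ` factor, acting on the fiber by
`α (h, 0) = (h₀⁻¹ h h₀, n h)` with `n` not identically zero. Then no positive power
`α ^ k` is inner; in particular `α` has infinite order in `Out G`. -/
theorem infinite_order_of_nonzero_translation
    {H : Type*} [Group H] (α : MulAut (H × Multiplicative ℤ))
    (ht : α (1, Multiplicative.ofAdd 1) = (1, Multiplicative.ofAdd 1))
    (h₀ : H) (n : H → ℤ)
    (hα : ∀ h : H, α (h, Multiplicative.ofAdd 0)
        = (h₀⁻¹ * h * h₀, Multiplicative.ofAdd (n h)))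
    (hne : ∃ h : H, n h ≠ 0) :
    ∀ k : ℕ, 1 ≤ k → ¬ ∃ g : H × Multiplicative ℤ, α ^ k = MulAut.conj g := by
  intro k hk hg
  obtain ⟨g, hg⟩ := hg
  obtain ⟨h, hh⟩ := hne
  -- n is additive
  have hadd : ∀ a b : H, n (a * b) = n a + n b := by
    intro a b
    have h1 : α (a * b, Multiplicative.ofAdd 0)
        = α (a, Multiplicative.ofAdd 0) * α (b, Multiplicative.ofAdd 0) := by
      rw [← map_mul]
      congr 1
    rw [hα, hα, hα] at h1
    have := congrArg Prod.snd h1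
    simpa [← ofAdd_add] using this
  have hone : n 1 = 0 := by have := hadd 1 1; simpa using this
  have hinv : ∀ a : H, n a⁻¹ = -n a := by
    intro a
    have := hadd a⁻¹ a
    simp [hone] at this
    omega
  have hconj : ∀ a : H, n (h₀⁻¹ * a * h₀) = n a := by
    intro a
    have h1 := hadd (h₀⁻¹ * a) h₀
    have h2 := hadd h₀⁻¹ a
    rw [h1, h2, hinv]
    ring
  -- α^k fixes the center elements (1, m)
  have hfix : ∀ m : ℤ, α (1, Multiplicative.ofAdd m) = (1, Multiplicative.ofAdd m) := by
    intro m
    have : ((1 : H), Multiplicative.ofAdd m) = ((1 : H), Multiplicative.ofAdd 1) ^ m := by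
      simp [Prod.ext_iff, ← ofAdd_zsmul]
    rw [this, map_zpow, ht]
  have hfixk : ∀ j : ℕ, ∀ m : ℤ,
      (α ^ j) (1, Multiplicative.ofAdd m) = (1, Multiplicative.ofAdd m) := by
    intro j
    induction j with
    | zero => intro m; rfl
    | succ j ih =>
        intro m
        rw [pow_succ, MulAut.mul_apply, hfix, ih]
  -- key formula for α^j on the fiber
  have key : ∀ j : ℕ, ∀ a : H, (α ^ j) (a, Multiplicative.ofAdd 0)
      = ((h₀ ^ j)⁻¹ * a * h₀ ^ j, Multiplicative.ofAdd (j * n a)) := by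
    intro j
    induction j with
    | zero => intro a; simp
    | succ j ih =>
        intro a
        rw [pow_succ, MulAut.mul_apply, hα]
        have hsplit : ((h₀⁻¹ * a * h₀ : H), Multiplicative.ofAdd (n a))
            = ((h₀⁻¹ * a * h₀ : H), Multiplicative.ofAdd 0)
              * ((1 : H), Multiplicative.ofAdd (n a)) := by
          simp [Prod.ext_iff]
        rw [hsplit, map_mul, ih, hfixk, hconj]
        simp only [Prod.mk_mul_mk, mul_one, ← ofAdd_add, Prod.mk.injEq]
        constructor
        · group
        · congr 1
          push_cast
          ring
  -- evaluate the equality α^k = conj g at (h, 0)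
  have heval := congrArg (fun f : MulAut (H × Multiplicative ℤ) => f (h, Multiplicative.ofAdd 0)) hg
  simp only [key k h, MulAut.conj_apply] at heval
  have := congrArg Prod.snd heval
  simp only [Prod.snd_mul, Prod.snd_inv] at this
  have h2 : Multiplicative.ofAdd ((k : ℤ) * n h) = Multiplicative.ofAdd 0 := by
    rw [this]
    simp [mul_comm]
  have h3 : (k : ℤ) * n h = 0 := Multiplicative.ofAdd.injective h2
  have hk0 : (k : ℤ) ≠ 0 := by exact_mod_cast Nat.one_le_iff_ne_zero.mp hk
  rcases mul_eq_zero.mp h3 with h4 | h4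
  · exact hk0 h4
  · exact hh h4
end

section
/- (Minkowski) The kernel of the reduction homomorphism GL_n(ℤ) → GL_n(ℤ/3ℤ) is torsion-free: if A ∈ GL_n(ℤ) satisfies A ≡ I modulo 3 and A^k = I for some k ≥ 1, then A = I. -/
/-!
Let `ℓ` be an odd prime (here `ℓ = 3`). Some power of a nontrivial element of finite order has
prime order `p`, so it suffices to show that `A ≡ 1 mod ℓ` and `A ^ p = 1` force `A = 1`.
Write `A = 1 + ℓ ^ m X` with `m ≥ 1`; expanding `(1 + ℓ ^ m X) ^ p = 1` gives
`p ℓ ^ m X + ∑_{i ≥ 2} C(p, i) ℓ ^ (m i) X ^ i = 0`. The sum is divisible by `ℓ ^ (m + 1)`, and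
even by `ℓ ^ (m + 2)` when `p = ℓ`: the inner binomial coefficients are divisible by `ℓ`, and
`m ℓ ≥ m + 2` as `ℓ ≥ 3`. Either way `ℓ ∣ X`, so `A ≡ 1 mod ℓ ^ m` for every `m`, whence `A = 1`.
-/

open Finset

theorem Submonoid.eq_one_of_pow_eq_one_of_forall_prime {G : Type*} [Monoid G]
    (S : Submonoid G) (hS : ∀ g ∈ S, ∀ p : ℕ, p.Prime → g ^ p = 1 → g = 1) {g : G} (hg : g ∈ S)
    {k : ℕ} (hk : k ≠ 0) (hgk : g ^ k = 1) : g = 1 := by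
  by_contra hne
  have hfin : orderOf g ≠ 0 :=
    (isOfFinOrder_iff_pow_eq_one.mpr ⟨k, Nat.pos_of_ne_zero hk, hgk⟩).orderOf_pos.ne'
  have hprime : (orderOf g).minFac.Prime := Nat.minFac_prime (mt orderOf_eq_one_iff.mp hne)
  have hord := orderOf_pow_orderOf_div hfin (Nat.minFac_dvd (orderOf g))
  have hpow : g ^ (orderOf g / (orderOf g).minFac) = 1 :=
    hS _ (S.pow_mem hg _) _ hprime <| by
      rw [← pow_mul, Nat.div_mul_cancel (Nat.minFac_dvd _), pow_orderOf_eq_one]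
  exact hprime.ne_one (by rw [← hord, hpow, orderOf_one])

theorem one_add_nsmul_pow {R : Type*} [Semiring R] (k : ℕ) (x : R) (n : ℕ) :
    (1 + k • x) ^ n = ∑ i ∈ range (n + 1), (n.choose i * k ^ i) • x ^ i := by
  rw [add_comm, (Commute.one_right _).add_pow]
  refine sum_congr rfl fun i _ => ?_
  rw [one_pow, mul_one, ← nsmul_eq_mul', smul_pow, smul_smul, mul_comm]

theorem exists_eq_nsmul_of_nsmul_eq_nsmul_of_coprime {M : Type*} [AddCommGroup M] {p ℓ : ℕ}
    (h : p.Coprime ℓ) {x y : M} (hxy : p • x = ℓ • y) : ∃ z, x = ℓ • z := by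
  obtain ⟨u, v, huv⟩ := Nat.isCoprime_iff_coprime.mpr h
  refine ⟨u • y + v • x, ?_⟩
  calc x = (u * p + v * ℓ : ℤ) • x := by rw [huv, one_smul]
    _ = u • (p • x) + ℓ • (v • x) := by
      rw [add_smul, mul_smul, mul_comm, mul_smul, natCast_zsmul, natCast_zsmul]
    _ = ℓ • (u • y + v • x) := by rw [hxy, smul_add, smul_comm]

theorem Finset.exists_sum_nsmul_eq_nsmul_of_dvd {ι M : Type*} [AddCommMonoid M] {s : Finset ι}
    {c : ι → ℕ} {N : ℕ} (h : ∀ i ∈ s, N ∣ c i) (f : ι → M) :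
    ∃ z, ∑ i ∈ s, c i • f i = N • z :=
  ⟨∑ i ∈ s, (c i / N) • f i, by
    rw [smul_sum]
    exact sum_congr rfl fun i hi => by rw [smul_smul, Nat.mul_div_cancel' (h i hi)]⟩

theorem Nat.Prime.pow_add_two_dvd_choose_mul_pow {ℓ m i : ℕ} (hℓ : ℓ.Prime)
    (hℓ2 : ℓ ≠ 2) (hm : m ≠ 0) (hi : i + 2 ≤ ℓ) :
    ℓ ^ (m + 2) ∣ ℓ.choose (i + 2) * (ℓ ^ m) ^ (i + 2) := by
  rw [← pow_mul]
  rcases hi.lt_or_eq with hi | hi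
  · rw [pow_succ']
    exact mul_dvd_mul (hℓ.dvd_choose_self (by omega) hi)
      (pow_dvd_pow ℓ (by nlinarith [Nat.pos_of_ne_zero hm]))
  · rw [hi, Nat.choose_self, one_mul]
    exact pow_dvd_pow ℓ (by nlinarith [hℓ.two_le.lt_of_ne' hℓ2, Nat.pos_of_ne_zero hm])

theorem exists_eq_nsmul_of_one_add_pow_eq_one {R : Type*} [Ring R] {ℓ p m : ℕ}
    (hℓ : ℓ.Prime) (hℓ2 : ℓ ≠ 2) (hp : p.Prime) (hm : m ≠ 0) (hreg : IsSMulRegular R ℓ)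
    {x : R} (h : (1 + ℓ ^ m • x) ^ p = 1) : ∃ y, x = ℓ • y := by
  obtain ⟨q, rfl⟩ : ∃ q, p = q + 2 := ⟨p - 2, by have := hp.two_le; omega⟩
  have hsum :
      ∑ i ∈ range (q + 1), ((q + 2).choose (i + 2) * (ℓ ^ m) ^ (i + 2)) • x ^ (i + 2) +
        ((q + 2) * ℓ ^ m) • x = 0 := by
    rw [one_add_nsmul_pow, sum_range_succ', sum_range_succ'] at h
    simpa only [Nat.choose_zero_right, Nat.choose_one_right, zero_add, pow_zero, pow_one, mul_one,
      one_smul, add_eq_right] using h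
  rcases eq_or_ne (q + 2) ℓ with hpℓ | hpℓ
  · rw [hpℓ] at hsum
    have hdvd :
        ∀ i ∈ range (q + 1), ℓ ^ (m + 2) ∣ ℓ.choose (i + 2) * (ℓ ^ m) ^ (i + 2) :=
      fun i hi => hℓ.pow_add_two_dvd_choose_mul_pow hℓ2 hm (by rw [mem_range] at hi; omega)
    obtain ⟨z, hz⟩ := exists_sum_nsmul_eq_nsmul_of_dvd hdvd fun i => x ^ (i + 2)
    refine ⟨-z, hreg.pow (m + 1) ?_⟩
    rw [hz, ← pow_succ'] at hsum
    dsimp only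
    rw [smul_smul, ← pow_succ, smul_neg]
    exact eq_neg_of_add_eq_zero_right hsum
  · have hpow_dvd : ∀ i, ℓ ^ (m + 1) ∣ (ℓ ^ m) ^ (i + 2) := fun i => by
      rw [← pow_mul]; exact pow_dvd_pow ℓ (by nlinarith [Nat.pos_of_ne_zero hm])
    obtain ⟨z, hz⟩ := exists_sum_nsmul_eq_nsmul_of_dvd (N := ℓ ^ (m + 1))
      (fun i _ => (hpow_dvd i).mul_left _) fun i => x ^ (i + 2)
    refine exists_eq_nsmul_of_nsmul_eq_nsmul_of_coprime ((Nat.coprime_primes hp hℓ).2 hpℓ)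
      (y := -z) (hreg.pow m ?_)
    rw [hz] at hsum
    dsimp only
    rw [smul_smul, smul_smul, mul_comm, ← pow_succ, smul_neg]
    exact eq_neg_of_add_eq_zero_right hsum

theorem Matrix.eq_zero_of_forall_exists_eq_pow_nsmul {m n : Type*} {ℓ : ℕ} (hℓ : ℓ ≠ 1)
    {B : Matrix m n ℤ} (h : ∀ k, ∃ C, B = ℓ ^ k • C) : B = 0 := by
  ext i j
  by_contra hB
  obtain ⟨k, hk⟩ := (Int.finiteMultiplicity_iff (a := ℓ)).mpr ⟨by simpa using hℓ, hB⟩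
  obtain ⟨C, rfl⟩ := h (k + 1)
  exact hk ⟨C i j, by simp⟩

theorem Matrix.exists_eq_nsmul_of_map_eq_zero {m n : Type*} {ℓ : ℕ} {B : Matrix m n ℤ}
    (h : B.map (Int.castRingHom (ZMod ℓ)) = 0) : ∃ C, B = ℓ • C := by
  refine ⟨Matrix.of fun i j => B i j / ℓ, Matrix.ext fun i j => ?_⟩
  have hdvd : (ℓ : ℤ) ∣ B i j := (ZMod.intCast_zmod_eq_zero_iff_dvd _ _).mp (congrFun₂ h i j)
  simp [Int.mul_ediv_cancel' hdvd]

namespace Matrix.GeneralLinearGroup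

variable {n : Type*} [Fintype n] [DecidableEq n] {ℓ : ℕ}

theorem eq_one_of_pow_prime_eq_one_of_map_eq_one (hℓ : ℓ.Prime) (hℓ2 : ℓ ≠ 2) {p : ℕ}
    (hp : p.Prime) {A : GL n ℤ} (hA : map (Int.castRingHom (ZMod ℓ)) A = 1)
    (hAp : A ^ p = 1) : A = 1 := by
  have hreg : IsSMulRegular (Matrix n n ℤ) ℓ :=
    IsSMulRegular.matrix (nsmul_right_injective hℓ.ne_zero : IsSMulRegular ℤ ℓ)
  have hbase : ∃ C, (A : Matrix n n ℤ) - 1 = ℓ ^ 1 • C := by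
    rw [pow_one]
    refine Matrix.exists_eq_nsmul_of_map_eq_zero ?_
    rw [← RingHom.mapMatrix_apply, map_sub, map_one, sub_eq_zero]
    exact congrArg Units.val hA
  have hdiv : ∀ k, 1 ≤ k → ∃ C, (A : Matrix n n ℤ) - 1 = ℓ ^ k • C := by
    refine Nat.le_induction hbase fun k hk ⟨C, hC⟩ => ?_
    have hCp : (1 + ℓ ^ k • C) ^ p = 1 := by
      rw [← hC, add_sub_cancel, ← Units.val_pow_eq_pow_val, hAp, Units.val_one]
    obtain ⟨D, rfl⟩ := exists_eq_nsmul_of_one_add_pow_eq_one hℓ hℓ2 hp (by omega) hreg hCp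
    exact ⟨D, by rw [hC, smul_smul, ← pow_succ]⟩
  have hA1 : (A : Matrix n n ℤ) - 1 = 0 := by
    refine Matrix.eq_zero_of_forall_exists_eq_pow_nsmul hℓ.ne_one fun k => ?_
    rcases Nat.eq_zero_or_pos k with rfl | hk
    · exact ⟨_, (one_smul ℕ _).symm⟩
    · exact hdiv k hk
  exact Units.ext (sub_eq_zero.mp hA1)

theorem eq_one_of_pow_eq_one_of_map_eq_one (hℓ : ℓ.Prime) (hℓ2 : ℓ ≠ 2) {A : GL n ℤ}
    (hA : map (Int.castRingHom (ZMod ℓ)) A = 1) {k : ℕ} (hk : k ≠ 0) (hAk : A ^ k = 1) :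
    A = 1 :=
  (MonoidHom.mker (map (Int.castRingHom (ZMod ℓ)))).eq_one_of_pow_eq_one_of_forall_prime
    (fun _ hB _ hp hBp => eq_one_of_pow_prime_eq_one_of_map_eq_one hℓ hℓ2 hp hB hBp) hA hk hAk

end Matrix.GeneralLinearGroup

/-- **Minkowski.** The kernel of the reduction homomorphism
`GL_n(ℤ) → GL_n(ℤ/3)` is torsion-free: a matrix `A ∈ GL_n(ℤ)` congruent to the
identity modulo `3` with `A ^ k = 1` for some `k ≥ 1` equals the identity. -/
theorem minkowski_kernel_torsionFree (n : ℕ)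
    (A : Matrix.GeneralLinearGroup (Fin n) ℤ)
    (hA : Matrix.GeneralLinearGroup.map (Int.castRingHom (ZMod 3)) A = 1)
    (k : ℕ) (hk : 1 ≤ k) (hAk : A ^ k = 1) : A = 1 :=
  Matrix.GeneralLinearGroup.eq_one_of_pow_eq_one_of_map_eq_one Nat.prime_three (by decide) hA
    (by omega) hAk
end

section
/- Let F be a free group and let H be a finitely generated subgroup of F × ℤ. Then either H is a free group, or H is isomorphic to L × ℤ for some finitely generated free group L. -/
private lemma freeGroup_fg_finite {β : Type*} (h : Group.FG (FreeGroup β)) : Finite β := by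
  have hsurj : Function.Surjective (Abelianization.of (G := FreeGroup β)) := fun x =>
    Quotient.inductionOn' x fun g => ⟨g, rfl⟩
  have h1 : Group.FG (Abelianization (FreeGroup β)) := Group.fg_of_surjective hsurj
  have h2 : AddGroup.FG (FreeAbelianGroup β) := GroupFG.iff_add_fg.mp h1
  have h3 : Module.Finite ℤ (FreeAbelianGroup β) := Module.Finite.iff_addGroup_fg.mpr h2
  exact Module.Finite.finite_basis (FreeAbelianGroup.basis β)

private lemma fg_free_equiv_fin (G : Type*) [Group G] [IsFreeGroup G] (h : Group.FG G) :
    ∃ κ : Type, Finite κ ∧ Nonempty (G ≃* FreeGroup κ) := by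
  let e := IsFreeGroup.toFreeGroup G
  have hfg : Group.FG (FreeGroup (IsFreeGroup.Generators G)) :=
    Group.fg_of_surjective (f := e.toMonoidHom) e.surjective
  have hfin : Finite (IsFreeGroup.Generators G) := freeGroup_fg_finite hfg
  obtain ⟨n, ⟨eq⟩⟩ := Finite.exists_equiv_fin (IsFreeGroup.Generators G)
  exact ⟨Fin n, inferInstance, ⟨e.trans (FreeGroup.freeGroupCongr eq)⟩⟩

private lemma subgroup_int_equiv (S : Subgroup (Multiplicative ℤ)) (hS : S ≠ ⊥) :
    Nonempty (S ≃* Multiplicative ℤ) := by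
  obtain ⟨x, hxS, hx⟩ := S.bot_or_exists_ne_one.resolve_left hS
  have ha : Multiplicative.toAdd x ≠ 0 := fun h0 => hx (by
    have : x = Multiplicative.ofAdd 0 := by
      rw [← h0]; rfl
    simpa using this)
  have hinj : Function.Injective (fun n : ℤ => (⟨x ^ n, S.zpow_mem hxS n⟩ : S)) := by
    intro n m hnm
    have h1 : x ^ n = x ^ m := congrArg Subtype.val hnm
    have h2 := congrArg Multiplicative.toAdd h1
    simp only [toAdd_zpow, smul_eq_mul] at h2
    exact mul_right_cancel₀ ha h2
  have : Infinite S := Infinite.of_injective _ hinj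
  exact ⟨mulEquivOfCyclicCardEq (by
    simp [Nat.card_eq_zero_of_infinite])⟩

/-- A finitely generated subgroup `H` of `F × ℤ`, where `F` is a
free group, is either a free group or isomorphic to `L × ℤ` for a finitely generated
free group `L`. -/
theorem subgroup_of_free_prod_int
    {ι : Type*} (H : Subgroup (FreeGroup ι × Multiplicative ℤ))
    (hH : Group.FG H) :
    (∃ κ : Type, Nonempty (H ≃* FreeGroup κ)) ∨
      (∃ κ : Type, Finite κ ∧
        Nonempty (H ≃* (FreeGroup κ × Multiplicative ℤ))) := by
  classical
  haveI := hH
  let π : ↥H →* FreeGroup ι := (MonoidHom.fst _ _).comp H.subtype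
  have hQfg : Group.FG π.range := Group.fg_range π
  obtain ⟨κ, hκfin, ⟨e4⟩⟩ := fg_free_equiv_fin π.range hQfg
  by_cases hker : π.ker = ⊥
  · -- `H` embeds into the free group, hence is free
    left
    have hinj : Function.Injective π := (MonoidHom.ker_eq_bot_iff π).mp hker
    exact ⟨κ, ⟨(MonoidHom.ofInjective hinj).trans e4⟩⟩
  · right
    refine ⟨κ, hκfin, ?_⟩
    set π' := π.rangeRestrict with hπ'
    -- elements of the kernel are central in `H`
    have hcentral : ∀ k : ↥H, k ∈ π.ker → ∀ h : ↥H, Commute (k : ↥H) h := by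
      intro k hk h
      have h1 : ((k : FreeGroup ι × Multiplicative ℤ)).1 = 1 := hk
      refine Subtype.ext (Prod.ext ?_ ?_)
      · show ((k : FreeGroup ι × Multiplicative ℤ) * h).1 = ((h : FreeGroup ι × Multiplicative ℤ) * k).1
        simp [h1]
      · exact mul_comm _ _
    -- a section of the projection onto the (free) range
    let sec : π.range →* ↥H :=
      IsFreeGroup.lift fun a => (π.rangeRestrict_surjective (IsFreeGroup.of a)).choose
    have hsec : ∀ q, π' (sec q) = q := by
      have hcomp : π'.comp sec = MonoidHom.id π.range := by
        refine IsFreeGroup.ext_hom fun a => ?_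
        simp only [MonoidHom.comp_apply, MonoidHom.id_apply]
        have := (π.rangeRestrict_surjective (IsFreeGroup.of a)).choose_spec
        rw [show sec (IsFreeGroup.of a)
            = (π.rangeRestrict_surjective (IsFreeGroup.of a)).choose from
          IsFreeGroup.lift_of _ a, this]
      intro q
      exact DFunLike.congr_fun hcomp q
    have hπsec : ∀ q, π (sec q) = (q : FreeGroup ι) := by
      intro q
      rw [← π.coe_rangeRestrict, hsec]
    -- the product map is an isomorphism
    let φ : (π.ker × π.range) →* ↥H :=
      MonoidHom.noncommCoprod π.ker.subtype sec fun k q => hcentral k k.2 (sec q)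
    have hφ : ∀ k q, φ (k, q) = (k : ↥H) * sec q := fun _ _ => rfl
    have hbij : Function.Bijective φ := by
      constructor
      · rw [injective_iff_map_eq_one]
        rintro ⟨k, q⟩ h
        have h1 : (k : ↥H) * sec q = 1 := h
        have hk1 : π' (k : ↥H) = 1 := by
          refine Subtype.ext ?_
          rw [π.coe_rangeRestrict, OneMemClass.coe_one]
          exact k.2
        have h2 : q = 1 := by
          have := congrArg π' h1
          rw [map_mul, hsec, map_one, hk1, one_mul] at this
          exact this
        have h3 : (k : ↥H) = 1 := by rwa [h2, map_one, mul_one] at h1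
        exact Prod.ext (Subtype.ext h3) h2
      · intro h
        refine ⟨(⟨h * (sec (π' h))⁻¹, ?_⟩, π' h), ?_⟩
        · show h * (sec (π' h))⁻¹ ∈ π.ker
          rw [MonoidHom.mem_ker, map_mul, map_inv, hπsec, π.coe_rangeRestrict,
            mul_inv_cancel]
        · show h * (sec (π' h))⁻¹ * sec (π' h) = h
          rw [inv_mul_cancel_right]
    let e1 : (π.ker × π.range) ≃* ↥H := MulEquiv.ofBijective φ hbij
    -- the kernel is isomorphic to `ℤ`
    let τ : π.ker →* Multiplicative ℤ :=
      (MonoidHom.snd _ _).comp (H.subtype.comp π.ker.subtype)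
    have hτ : ∀ k : π.ker, τ k = ((k : ↥H) : FreeGroup ι × Multiplicative ℤ).2 := fun _ => rfl
    have hτinj : Function.Injective τ := by
      rw [injective_iff_map_eq_one]
      intro k hk
      have h1 : (((k : ↥H) : FreeGroup ι × Multiplicative ℤ)).1 = 1 := k.2
      have h2 : (((k : ↥H) : FreeGroup ι × Multiplicative ℤ)).2 = 1 := hk
      exact Subtype.ext (Subtype.ext (Prod.ext h1 h2))
    have hrange_ne : τ.range ≠ ⊥ := by
      intro hb
      apply hker
      rw [eq_bot_iff]
      intro k hk
      have h1 : τ ⟨k, hk⟩ = 1 := by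
        have : τ ⟨k, hk⟩ ∈ τ.range := ⟨⟨k, hk⟩, rfl⟩
        rw [hb] at this
        simpa using this
      have := hτinj (by rw [h1, map_one] : τ ⟨k, hk⟩ = τ 1)
      simpa [Subgroup.mem_bot] using congrArg Subtype.val this
    obtain ⟨e3⟩ := subgroup_int_equiv τ.range hrange_ne
    let e2 : π.ker ≃* τ.range := MonoidHom.ofInjective hτinj
    exact ⟨e1.symm.trans (((e2.trans e3).prodCongr e4).trans MulEquiv.prodComm)⟩
end

section
/- Let F be a free group, α an automorphism of F, and G = F ⋊_α ℤ the mapping torus (the semidirect product in which the generator of ℤ acts on F by α). Let H be a subgroup of G containing no non-abelian free subgroup, i.e. there is no injective group homomorphism from the free group of rank 2 into G whose image is contained in H. Then the intersection H ∩ F is cyclic (possibly trivial), H is generated by at most two elements, and in particular H is finitely generated. -/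
/-!
By Nielsen–Schreier every subgroup of `F` is free, and a free group that is not cyclic has
two distinct basis elements, which span a free subgroup of rank two. Hence `H ∩ F` is cyclic.
Since `F` is the kernel of the projection `G → ℤ`, the image of `H` in `ℤ` is cyclic as well, so
`H` is generated by a generator of `H ∩ F` together with any lift of a generator of its image.
-/

open Function SemidirectProduct

theorem FreeGroup.isCyclic_of_subsingleton {X : Type*} [Subsingleton X] :
    IsCyclic (FreeGroup X) := by
  cases isEmpty_or_nonempty X
  · infer_instance
  · have := uniqueOfSubsingleton (Classical.arbitrary X)
    infer_instance

theorem IsFreeGroup.exists_injective_freeGroup_fin_two_of_not_isCyclic {G : Type*} [Group G]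
    [IsFreeGroup G] (hG : ¬IsCyclic G) : ∃ f : FreeGroup (Fin 2) →* G, Injective f := by
  have : Nontrivial (Generators G) := by
    by_contra! h
    have := FreeGroup.isCyclic_of_subsingleton (X := Generators G)
    exact hG (isCyclic_of_surjective _ (toFreeGroup G).symm.surjective)
  obtain ⟨a, b, hab⟩ := exists_pair_ne (Generators G)
  exact ⟨(toFreeGroup G).symm.toMonoidHom.comp (FreeGroup.map ![a, b]),
    (toFreeGroup G).symm.injective.comp (FreeGroup.map_injective (injective_pair_iff_ne.2 hab))⟩

namespace Subgroup

variable {G Q : Type*} [Group G] [Group Q]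

theorem isCyclic_comap_of_isFreeGroup {F : Type*} [Group F] [IsFreeGroup F] {φ : F →* G}
    (hφ : Injective φ) {H : Subgroup G}
    (hH : ¬∃ f : FreeGroup (Fin 2) →* G, Injective f ∧ f.range ≤ H) :
    IsCyclic (H.comap φ) := by
  by_contra hcyc
  obtain ⟨f, hf⟩ := IsFreeGroup.exists_injective_freeGroup_fin_two_of_not_isCyclic hcyc
  refine hH ⟨(φ.comp (H.comap φ).subtype).comp f, hφ.comp (Subtype.val_injective.comp hf), ?_⟩
  rintro _ ⟨w, rfl⟩
  exact (f w).2

theorem le_inf_ker_sup_zpowers {f : G →* Q} {H : Subgroup G} {t : G} (ht : t ∈ H)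
    (hmap : H.map f ≤ zpowers (f t)) : H ≤ (H ⊓ f.ker) ⊔ zpowers t := by
  intro h hh
  obtain ⟨n, hn⟩ := mem_zpowers_iff.mp (hmap (mem_map_of_mem f hh))
  have hker : h * (t ^ n)⁻¹ ∈ H ⊓ f.ker :=
    ⟨H.mul_mem hh (H.inv_mem (H.zpow_mem ht n)), by simp [hn]⟩
  simpa using mul_mem_sup hker (zpow_mem (mem_zpowers t) n)

theorem exists_eq_closure_pair_of_isCyclic (f : G →* Q) (H : Subgroup G)
    [IsCyclic ↥(H ⊓ f.ker)] [IsCyclic ↥(H.map f)] : ∃ a b : G, H = closure {a, b} := by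
  obtain ⟨c, hc⟩ := (H ⊓ f.ker).isCyclic_iff_exists_zpowers_eq_top.mp ‹_›
  obtain ⟨q, hq⟩ := (H.map f).isCyclic_iff_exists_zpowers_eq_top.mp ‹_›
  obtain ⟨t, htH, rfl⟩ := hq ▸ mem_zpowers q
  refine ⟨c, t, le_antisymm ?_ ?_⟩
  · rw [Set.insert_eq, closure_union, ← zpowers_eq_closure, ← zpowers_eq_closure, hc]
    exact le_inf_ker_sup_zpowers htH hq.ge
  · rw [closure_le, Set.insert_subset_iff, Set.singleton_subset_iff]
    exact ⟨(hc ▸ mem_zpowers c).1, htH⟩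

end Subgroup

/-- In a mapping torus `G = F ⋊_α ℤ` of a free group `F`, any
subgroup `H` containing no non-abelian free subgroup meets the fiber `F` in a cyclic
(possibly trivial) subgroup, is generated by at most two elements, and in particular
is finitely generated. -/
theorem small_subgroup_of_free_mapping_torus
    {ι : Type*} (α : MulAut (FreeGroup ι))
    (H : Subgroup (FreeGroup ι ⋊[zpowersHom (MulAut (FreeGroup ι)) α]
      Multiplicative ℤ))
    (hsmall : ¬ ∃ f : FreeGroup (Fin 2) →*
        (FreeGroup ι ⋊[zpowersHom (MulAut (FreeGroup ι)) α] Multiplicative ℤ),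
      Function.Injective f ∧ f.range ≤ H) :
    IsCyclic ↥(H ⊓ (SemidirectProduct.inl : FreeGroup ι →*
        FreeGroup ι ⋊[zpowersHom (MulAut (FreeGroup ι)) α] Multiplicative ℤ).range) ∧
    (∃ a b : FreeGroup ι ⋊[zpowersHom (MulAut (FreeGroup ι)) α] Multiplicative ℤ,
      H = Subgroup.closure {a, b}) ∧
    H.FG := by
  have hfiber := Subgroup.isCyclic_comap_of_isFreeGroup inl_injective hsmall
  have hcyc : IsCyclic ↥(H ⊓ inl.range) := by
    rw [inf_comm, ← Subgroup.map_comap_eq]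
    exact isCyclic_of_surjective _ (inl.subgroupMap_surjective _)
  rw [range_inl_eq_ker_rightHom] at hcyc ⊢
  obtain ⟨a, b, hab⟩ := H.exists_eq_closure_pair_of_isCyclic rightHom
  exact ⟨hcyc, ⟨a, b, hab⟩, H.fg_iff.2 ⟨{a, b}, hab.symm, Set.toFinite _⟩⟩
end
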